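/- arXiv:1801.07321 — 2 statements merged into one kernel-verified Lean document; each statement's English description precedes it below -/
import Mathlib

section
/- If enc: Σ → Γ^k encodes each letter as a word of the same length k ≥ 1 (with all codewords distinct), then η(enc(L)) = η(L)/k for every language L ⊆ Σ*, with the convention ∞/k = ∞. -/
/-!
Encoding multiplies lengths by `k`, so compare the Myhill–Nerode indices of `L` at depth `n` and
of `enc(L)` at depth `k n`. Classes of `L` inject into classes of `enc(L)` via `x ↦ enc(x)`.
Conversely, a word over `Γ` that is not dead at depth `k n` is `enc(x) ++ s` with `|s| < k`, and
its class depends only on `s` and the depth-`n` class of `x`; so, up to one dead class, the index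
of `enc(L)` at depth `k n` is at most `#{s : |s| < k}` times the index of `L` at depth `n`.
Indices are monotone in the depth, so the growth rate of `n ↦ ind Θ_{kn}(enc(L))` is
`k ⋅ η(enc(L))`, and the two bounds give `k ⋅ η(enc(L)) = η(L)`.
-/

open Filter

/-- The `n`-th Myhill–Nerode approximation: `u ~ v` iff all witnesses of length at most `n`
agree. -/
def thetaN {α : Type*} (L : Set (List α)) (n : ℕ) (u v : List α) : Prop :=
  ∀ w : List α, w.length ≤ n → ((u ++ w) ∈ L ↔ (v ++ w) ∈ L)

/-- The index (number of classes) of `thetaN L n`. -/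
noncomputable def indexN {α : Type*} (L : Set (List α)) (n : ℕ) : ℕ :=
  Nat.card (Quot (thetaN L n))

/-- Topological entropy of a language, with values in `[0,∞]`. -/
noncomputable def entropy {α : Type*} (L : Set (List α)) : ENNReal :=
  Filter.limsup (fun n : ℕ => ENNReal.ofReal (Real.logb 2 (indexN L n) / n)) Filter.atTop

/-- Homomorphic extension of a letter-encoding to words. -/
def encWord {α β : Type*} (enc : α → List β) (u : List α) : List β :=
  (u.map enc).flatten

open ENNReal ExpGrowth

section Encoding

variable {α β : Type*} {enc : α → List β} {k : ℕ}

theorem encWord_cons (a : α) (u : List α) : encWord enc (a :: u) = enc a ++ encWord enc u := rfl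

theorem encWord_append (u v : List α) :
    encWord enc (u ++ v) = encWord enc u ++ encWord enc v := by
  simp [encWord]

theorem length_encWord (hlen : ∀ a, (enc a).length = k) (u : List α) :
    (encWord enc u).length = k * u.length := by
  induction u with
  | nil => rfl
  | cons a u ih => rw [encWord_cons, List.length_append, ih, hlen, List.length_cons]; ring

theorem take_encWord (hlen : ∀ a, (enc a).length = k) (u : List α) (q : ℕ) :
    (encWord enc u).take (k * q) = encWord enc (u.take q) := by
  induction u generalizing q with
  | nil => simp [encWord]
  | cons a u ih =>
    cases q with
    | zero => simp [encWord]
    | succ q =>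
      have hkq : k * (q + 1) = (enc a).length + k * q := by rw [hlen]; ring
      rw [hkq, encWord_cons, List.take_length_add_append, ih, List.take_succ_cons, encWord_cons]

theorem encWord_injective (hk : 0 < k) (hlen : ∀ a, (enc a).length = k)
    (hinj : Function.Injective enc) : Function.Injective (encWord enc) := by
  intro u v h
  have hl : u.length = v.length := Nat.eq_of_mul_eq_mul_left hk <| by
    rw [← length_encWord hlen, ← length_encWord hlen, h]
  induction u generalizing v with
  | nil => exact (List.length_eq_zero_iff.1 hl.symm).symm
  | cons a u ih =>
    obtain _ | ⟨b, v⟩ := v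
    · simp at hl
    · rw [encWord_cons, encWord_cons] at h
      obtain ⟨hab, huv⟩ := List.append_inj h (by rw [hlen, hlen])
      rw [hinj hab, ih huv (by simpa using hl)]

theorem encWord_eq_encWord_append_iff (hk : 0 < k) (hlen : ∀ a, (enc a).length = k)
    (hinj : Function.Injective enc) {z x : List α} {v : List β} :
    encWord enc z = encWord enc x ++ v ↔ ∃ y, z = x ++ y ∧ encWord enc y = v := by
  constructor
  · intro h
    have hx : z.take x.length = x := encWord_injective hk hlen hinj <| by
      rw [← take_encWord hlen, h, ← length_encWord hlen x, List.take_left]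
    have hz : z = x ++ z.drop x.length := by conv_lhs => rw [← List.take_append_drop x.length z, hx]
    refine ⟨z.drop x.length, hz, List.append_cancel_left (as := encWord enc x) ?_⟩
    rw [← encWord_append, ← hz, h]
  · rintro ⟨y, rfl, rfl⟩
    exact encWord_append x y

theorem encWord_append_mem_image_iff (hk : 0 < k) (hlen : ∀ a, (enc a).length = k)
    (hinj : Function.Injective enc) {L : Set (List α)} {x : List α} {v : List β} :
    encWord enc x ++ v ∈ encWord enc '' L ↔ ∃ y, encWord enc y = v ∧ x ++ y ∈ L := by
  simp only [Set.mem_image, encWord_eq_encWord_append_iff hk hlen hinj]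
  constructor
  · rintro ⟨z, hz, y, rfl, hy⟩
    exact ⟨y, hy, hz⟩
  · rintro ⟨y, hy, hxy⟩
    exact ⟨x ++ y, hxy, y, rfl, hy⟩

theorem exists_eq_encWord_append_of_prefix (hk : 0 < k) (hlen : ∀ a, (enc a).length = k)
    {u : List β} {z : List α} (h : u <+: encWord enc z) :
    ∃ x s, s.length < k ∧ u = encWord enc x ++ s := by
  refine ⟨z.take (u.length / k), u.drop (k * (u.length / k)), ?_, ?_⟩
  · have := Nat.div_add_mod u.length k
    have := Nat.mod_lt u.length hk
    rw [List.length_drop]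
    omega
  · have hprefix : ∀ j ≤ u.length, (encWord enc z).take j = u.take j := fun j hj => by
      rw [List.prefix_iff_eq_take.1 h, List.take_take, min_eq_left hj]
    rw [← take_encWord hlen, hprefix _ (Nat.mul_div_le _ _), List.take_append_drop]

end Encoding

section Index

variable {α : Type*}

theorem thetaN_equivalence (L : Set (List α)) (n : ℕ) : Equivalence (thetaN L n) where
  refl _ _ _ := Iff.rfl
  symm h w hw := (h w hw).symm
  trans h₁ h₂ w hw := (h₁ w hw).trans (h₂ w hw)

instance finite_quot_thetaN [Finite α] (L : Set (List α)) (n : ℕ) :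
    Finite (Quot (thetaN L n)) := by
  have : Finite {w : List α // w.length ≤ n} := (List.finite_length_le α n).to_subtype
  refine Finite.of_injective
    (Quot.lift (fun u (w : {w : List α // w.length ≤ n}) => u ++ w.1 ∈ L)
      fun u v h => funext fun w => propext (h w.1 w.2)) ?_
  rintro ⟨u⟩ ⟨v⟩ h
  exact Quot.sound fun w hw => iff_of_eq (congrFun h ⟨w, hw⟩)

theorem indexN_pos [Finite α] (L : Set (List α)) (n : ℕ) : 0 < indexN L n :=
  Nat.card_pos

theorem indexN_mono [Finite α] (L : Set (List α)) : Monotone (indexN L) := fun _ _ hnm =>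
  Nat.card_le_card_of_surjective (Quot.map id fun _ _ h w hw => h w (hw.trans hnm))
    (Quot.ind fun u => ⟨Quot.mk _ u, rfl⟩)

end Index

section EncodedIndex

variable {α β : Type*} {enc : α → List β} {k : ℕ}

theorem thetaN_image_encWord_append (hk : 0 < k) (hlen : ∀ a, (enc a).length = k)
    (hinj : Function.Injective enc) {L : Set (List α)} {n m : ℕ} {x x' : List α} {s : List β}
    (hm : s.length + m < k * (n + 1)) (h : thetaN L n x x') :
    thetaN (encWord enc '' L) m (encWord enc x ++ s) (encWord enc x' ++ s) := by
  intro w hw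
  simp only [List.append_assoc, encWord_append_mem_image_iff hk hlen hinj]
  refine exists_congr fun y => and_congr_right fun hy => h y ?_
  have hy_len : k * y.length = s.length + w.length := by
    rw [← length_encWord hlen, hy, List.length_append]
  exact Nat.lt_succ_iff.mp (Nat.lt_of_mul_lt_mul_left (show k * y.length < k * (n + 1) by omega))

theorem thetaN_of_thetaN_image_encWord (hk : 0 < k) (hlen : ∀ a, (enc a).length = k)
    (hinj : Function.Injective enc) {L : Set (List α)} {n : ℕ} {x x' : List α}
    (h : thetaN (encWord enc '' L) (k * n) (encWord enc x) (encWord enc x')) :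
    thetaN L n x x' := by
  intro w hw
  have := h (encWord enc w) (by rw [length_encWord hlen]; exact Nat.mul_le_mul_left k hw)
  rwa [← encWord_append, ← encWord_append, (encWord_injective hk hlen hinj).mem_set_image,
    (encWord_injective hk hlen hinj).mem_set_image] at this

theorem indexN_le_indexN_image [Finite β] (hk : 0 < k) (hlen : ∀ a, (enc a).length = k)
    (hinj : Function.Injective enc) (L : Set (List α)) (n : ℕ) :
    indexN L n ≤ indexN (encWord enc '' L) (k * n) := by
  refine Nat.card_le_card_of_injective
    (Quot.map (encWord enc) fun x x' h => by
      simpa using thetaN_image_encWord_append hk hlen hinj (s := []) (m := k * n)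
        (by simpa [Nat.mul_succ] using hk) h) ?_
  rintro ⟨x⟩ ⟨x'⟩ h
  exact Quot.sound <| thetaN_of_thetaN_image_encWord hk hlen hinj <|
    ((thetaN_equivalence _ _).eqvGen_iff).1 (Quot.eq.1 h)

theorem indexN_image_le [Finite α] [Finite β] (hk : 0 < k) (hlen : ∀ a, (enc a).length = k)
    (hinj : Function.Injective enc) (L : Set (List α)) (n : ℕ) :
    indexN (encWord enc '' L) (k * n) ≤
      Nat.card {s : List β // s.length < k} * indexN L n + 1 := by
  classical
  set M := encWord enc '' L
  have : Finite {s : List β // s.length < k} := (List.finite_length_lt β k).to_subtype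
  -- `none` hits the one class of the words having no extension of length `≤ k n` in `M`
  let Φ : Option ({s : List β // s.length < k} × Quot (thetaN L n)) → Quot (thetaN M (k * n))
    | some (s, c) => Quot.map (encWord enc · ++ s.1)
        (fun _ _ h => thetaN_image_encWord_append hk hlen hinj (by rw [Nat.mul_succ]; omega) h) c
    | none => if hdead : ∃ u, ∀ w : List β, w.length ≤ k * n → u ++ w ∉ M
        then Quot.mk _ hdead.choose else Quot.mk _ []
  calc indexN M (k * n) ≤ Nat.card (Option ({s : List β // s.length < k} × Quot (thetaN L n))) :=
        Nat.card_le_card_of_surjective Φ ?_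
    _ = _ := by rw [Finite.card_option, Nat.card_prod, indexN]
  rintro ⟨u⟩
  by_cases halive : ∃ w : List β, w.length ≤ k * n ∧ u ++ w ∈ M
  · obtain ⟨w, -, z, -, hz⟩ := halive
    obtain ⟨x, s, hs, rfl⟩ := exists_eq_encWord_append_of_prefix hk hlen ⟨w, hz.symm⟩
    exact ⟨some (⟨s, hs⟩, Quot.mk _ x), rfl⟩
  · simp only [not_exists, not_and] at halive
    have hdead : ∃ u, ∀ w : List β, w.length ≤ k * n → u ++ w ∉ M := ⟨u, halive⟩
    refine ⟨none, ?_⟩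
    simp only [Φ, dif_pos hdead]
    exact Quot.sound fun w hw => iff_of_false (hdead.choose_spec w hw) (halive w hw)

end EncodedIndex

theorem ofReal_logb_natCast_div (x n : ℕ) (hn : 0 < n) :
    ENNReal.ofReal (Real.logb 2 x / n) =
      (ENNReal.log x / n : EReal).toENNReal / ENNReal.ofReal (Real.log 2) := by
  rcases Nat.eq_zero_or_pos x with rfl | hx
  · rw [Nat.cast_zero, Nat.cast_zero, ENNReal.log_zero,
      EReal.bot_div_of_pos_ne_top (by exact_mod_cast hn) (EReal.natCast_ne_top n)]
    simp
  · rw [← ENNReal.ofReal_natCast, ENNReal.log_ofReal_of_pos (by positivity),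
      ← EReal.coe_coe_eq_natCast, ← EReal.coe_div, EReal.real_coe_toENNReal,
      ← ENNReal.ofReal_div_of_pos (Real.log_pos one_lt_two), Real.logb, div_right_comm]

theorem limsup_ofReal_logb_div_eq_expGrowthSup (u : ℕ → ℕ) :
    limsup (fun n : ℕ => ENNReal.ofReal (Real.logb 2 (u n) / n)) atTop =
      (expGrowthSup fun n => (u n : ℝ≥0∞)).toENNReal / ENNReal.ofReal (Real.log 2) := by
  have hc : (ENNReal.ofReal (Real.log 2))⁻¹ ≠ ⊤ :=
    ENNReal.inv_ne_top.2 (ENNReal.ofReal_pos.2 (Real.log_pos one_lt_two)).ne'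
  rw [limsup_congr ((eventually_gt_atTop 0).mono fun n hn => ofReal_logb_natCast_div (u n) n hn)]
  simp_rw [ENNReal.div_eq_inv_mul]
  rw [ENNReal.limsup_const_mul_of_ne_top hc, expGrowthSup,
    Monotone.map_limsup_of_continuousAt (f := EReal.toENNReal)
      (fun _ _ => EReal.toENNReal_le_toENNReal) _ EReal.continuous_toENNReal.continuousAt]
  rfl

theorem entropy_eq_toENNReal_expGrowthSup {α : Type*} (L : Set (List α)) :
    entropy L =
      (expGrowthSup fun n => (indexN L n : ℝ≥0∞)).toENNReal / ENNReal.ofReal (Real.log 2) :=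
  limsup_ofReal_logb_div_eq_expGrowthSup (indexN L)

theorem natCast_mul_expGrowthSup_indexN_image {α β : Type*} [Finite α] [Finite β]
    {enc : α → List β} {k : ℕ} (hk : 0 < k) (hlen : ∀ a, (enc a).length = k)
    (hinj : Function.Injective enc) (L : Set (List α)) :
    (k : EReal) * expGrowthSup (fun n => (indexN (encWord enc '' L) n : ℝ≥0∞)) =
      expGrowthSup (fun n => (indexN L n : ℝ≥0∞)) := by
  have hmono : Monotone fun n => (indexN (encWord enc '' L) n : ℝ≥0∞) :=
    Nat.mono_cast.comp (indexN_mono _)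
  rw [← hmono.expGrowthSup_comp_mul hk.ne']
  apply le_antisymm
  · refine expGrowthSup_le_of_eventually_le (b := Nat.card {s : List β // s.length < k} + 1)
      (by simp) (Eventually.of_forall fun n => ?_)
    have hpos := indexN_pos L n
    have hle := indexN_image_le hk hlen hinj L n
    exact_mod_cast (show _ ≤ (Nat.card {s : List β // s.length < k} + 1) * indexN L n by nlinarith)
  · exact expGrowthSup_monotone fun n => by
      exact_mod_cast indexN_le_indexN_image hk hlen hinj L n

theorem entropy_encoding_same_length {α β : Type*} [Fintype α] [Fintype β]
    (enc : α → List β) (k : ℕ) (hk : 1 ≤ k)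
    (hlen : ∀ a, (enc a).length = k) (hinj : Function.Injective enc)
    (L : Set (List α)) :
    entropy (encWord enc '' L) = entropy L / (k : ENNReal) := by
  have hk0 : (k : ℝ≥0∞) ≠ 0 := by exact_mod_cast (Nat.one_le_iff_ne_zero.mp hk)
  rw [ENNReal.eq_div_iff hk0 (natCast_ne_top k), entropy_eq_toENNReal_expGrowthSup,
    entropy_eq_toENNReal_expGrowthSup, ← natCast_mul_expGrowthSup_indexN_image hk hlen hinj L,
    EReal.toENNReal_mul (by positivity), ← EReal.coe_coe_eq_natCast, EReal.real_coe_toENNReal,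
    ENNReal.ofReal_natCast, mul_div_assoc]
end

section
/- For any language L over an alphabet Σ with |Σ| ≥ 2, the padded language PAD(L) = {uv | u ∈ L, v ∈ Σ^{2^{|u|}}} has topological entropy zero. -/
open Filter

/-- The padded version of a language. -/
def PAD {α : Type*} (L : Set (List α)) : Set (List α) :=
  {w | ∃ u ∈ L, ∃ v : List α, v.length = 2 ^ u.length ∧ w = u ++ v}

/-!
If `2 ^ |x| > n`, a suffix `w` with `|w| ≤ n` can put `x ++ w` into `PAD L` only through a
prefix `x.take k ∈ L` with `|x| + |w| = k + 2 ^ k`. So membership depends only on `|w|`, and the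
`θ_n`-class of `x` is determined by the set of admissible lengths `|w| ≤ n`. A window of length
`n` contains at most `log₂ n + 2` numbers `k + 2 ^ k` (beyond `k = log₂ n` they are more than `n`
apart), so there are `n ^ O(log n)` such sets; the remaining words have length at most `log₂ n`,
and there are `n ^ O(1)` of them. Hence `log₂ ind Θ_n (PAD L) = O(log² n) = o(n)`.
-/

open Finset

section Counting

variable (β : Type*) [Fintype β]

theorem card_lists_of_length_le (r : ℕ) :
    Nat.card {l : List β // l.length ≤ r} ≤ (Fintype.card β + 1) ^ r := by
  have hinj : Function.Injective
      fun (l : {l : List β // l.length ≤ r}) (i : Fin r) => l.1[(i : ℕ)]? := by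
    rintro ⟨l, hl⟩ ⟨l', hl'⟩ h
    refine Subtype.ext (List.ext_getElem? fun i => ?_)
    show l[i]? = l'[i]?
    by_cases hi : i < r
    · exact congrFun h ⟨i, hi⟩
    · rw [List.getElem?_eq_none (by omega), List.getElem?_eq_none (by omega)]
  simpa [Nat.card_eq_fintype_card, Fintype.card_fun] using Nat.card_le_card_of_injective _ hinj

theorem card_finsets_of_card_le [LinearOrder β] (r : ℕ) :
    Nat.card {s : Finset β // s.card ≤ r} ≤ (Fintype.card β + 1) ^ r := by
  have : Finite {l : List β // l.length ≤ r} := (List.finite_length_le β r).to_subtype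
  have hinj : Function.Injective fun s : {s : Finset β // s.card ≤ r} =>
      (⟨s.1.sort (· ≤ ·), by simpa using s.2⟩ : {l : List β // l.length ≤ r}) := by
    rintro ⟨s, _⟩ ⟨t, _⟩ h
    simp only [Subtype.mk.injEq] at h ⊢
    rw [← Finset.sort_toFinset s (· ≤ ·), h, Finset.sort_toFinset]
  exact (Nat.card_le_card_of_injective _ hinj).trans (card_lists_of_length_le β r)

end Counting

theorem indexN_le_card_of_eq_imp_thetaN {α β : Type*} [Finite β] {L : Set (List α)} {n : ℕ}
    (f : List α → β) (hf : ∀ x y, f x = f y → thetaN L n x y) : indexN L n ≤ Nat.card β := by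
  have hsurj : Function.Surjective fun b : Set.range f => Quot.mk (thetaN L n) b.2.choose := by
    rintro ⟨x⟩
    have hx : ∃ y, f y = f x := ⟨x, rfl⟩
    exact ⟨⟨f x, hx⟩, Quot.sound (hf _ _ hx.choose_spec)⟩
  exact (Nat.card_le_card_of_surjective _ hsurj).trans
    (Nat.card_le_card_of_injective _ Subtype.val_injective)

theorem tendsto_natLog_add_sq_div (c : ℕ) :
    Tendsto (fun n : ℕ => ((Nat.log 2 n + c : ℕ) : ℝ) ^ 2 / n) atTop (nhds 0) := by
  have hlog : Tendsto (Nat.log 2) atTop atTop :=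
    tendsto_atTop_atTop.2 fun k => ⟨2 ^ k, fun n hn => Nat.le_log_of_pow_le one_lt_two hn⟩
  have hpow : Tendsto (fun k : ℕ => ((k + c : ℕ) : ℝ) ^ 2 / 2 ^ k) atTop (nhds 0) := by
    have := ((tendsto_pow_const_div_const_pow_of_one_lt 2 one_lt_two).comp
      (tendsto_add_atTop_nat c)).const_mul ((2 : ℝ) ^ c)
    rw [mul_zero] at this
    refine this.congr fun k => ?_
    simp only [Function.comp_apply, pow_add]
    field_simp
  refine squeeze_zero' (Eventually.of_forall fun n => by positivity) ?_ (hpow.comp hlog)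
  filter_upwards [eventually_ne_atTop 0] with n hn
  exact div_le_div_of_nonneg_left (by positivity) (by positivity)
    (by exact_mod_cast Nat.pow_log_le_self 2 hn)

theorem entropy_eq_zero_of_indexN_le_two_pow {α : Type*} {L : Set (List α)} (c : ℕ)
    (h : ∀ n, indexN L n ≤ 2 ^ (Nat.log 2 n + c) ^ 2) : entropy L = 0 := by
  have hlogb : ∀ n, Real.logb 2 (indexN L n) ≤ ((Nat.log 2 n + c : ℕ) : ℝ) ^ 2 := by
    intro n
    rcases Nat.eq_zero_or_pos (indexN L n) with h0 | hpos
    · rw [h0, Nat.cast_zero, Real.logb_zero]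
      positivity
    · calc Real.logb 2 (indexN L n)
          ≤ Real.logb 2 ((2 ^ (Nat.log 2 n + c) ^ 2 : ℕ) : ℝ) :=
            Real.logb_le_logb_of_le one_lt_two (by exact_mod_cast hpos) (by exact_mod_cast h n)
        _ = ((Nat.log 2 n + c : ℕ) : ℝ) ^ 2 := by
            rw [Nat.cast_pow, Nat.cast_ofNat, Real.logb_pow, Real.logb_self_eq_one one_lt_two,
              mul_one, Nat.cast_pow]
  have hnonneg : ∀ n : ℕ, 0 ≤ Real.logb 2 (indexN L n) / n := fun n =>
    div_nonneg (div_nonneg (Real.log_natCast_nonneg _) (Real.log_nonneg one_le_two)) n.cast_nonneg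
  have hlim : Tendsto (fun n : ℕ => Real.logb 2 (indexN L n) / n) atTop (nhds 0) :=
    squeeze_zero hnonneg (fun n => div_le_div_of_nonneg_right (hlogb n) n.cast_nonneg)
      (tendsto_natLog_add_sq_div c)
  rw [entropy]
  simpa using (ENNReal.tendsto_ofReal hlim).limsup_eq

theorem entropy_eq_zero_of_indexN_le_pow {α : Type*} {L : Set (List α)} (c : ℕ)
    (h : ∀ n, indexN L n ≤ (n + c) ^ (Nat.log 2 n + c)) : entropy L = 0 := by
  refine entropy_eq_zero_of_indexN_le_two_pow (c + 1) fun n => (h n).trans ?_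
  set l := Nat.log 2 n
  have hbase : n + c ≤ 2 ^ (l + c + 1) := by
    have hn : n + 1 ≤ 2 ^ (l + 1) := Nat.lt_pow_succ_log_self one_lt_two n
    have hc : c + 1 ≤ 2 ^ c := Nat.lt_two_pow_self
    calc n + c ≤ (n + 1) * (c + 1) := by nlinarith
      _ ≤ 2 ^ (l + 1) * 2 ^ c := Nat.mul_le_mul hn hc
      _ = 2 ^ (l + c + 1) := by ring
  calc (n + c) ^ (l + c) ≤ (2 ^ (l + c + 1)) ^ (l + c) := Nat.pow_le_pow_left hbase _
    _ = 2 ^ ((l + c + 1) * (l + c)) := (pow_mul _ _ _).symm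
    _ ≤ 2 ^ (l + (c + 1)) ^ 2 := Nat.pow_le_pow_right two_pos (by nlinarith)

theorem card_filter_add_two_pow_mem_Icc_le (m n : ℕ) :
    ((range (m + n + 1)).filter fun k => k + 2 ^ k ∈ Icc m (m + n)).card ≤ Nat.log 2 n + 2 := by
  set K := (range (m + n + 1)).filter fun k => k + 2 ^ k ∈ Icc m (m + n)
  have hsmall : ∀ k ∈ K, ∀ k' ∈ K, k < k' → k ≤ Nat.log 2 n := by
    intro k hk k' hk' hlt
    simp only [K, mem_filter, mem_Icc] at hk hk'
    have : 2 ^ (k + 1) ≤ 2 ^ k' := Nat.pow_le_pow_right two_pos hlt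
    exact Nat.le_log_of_pow_le one_lt_two (by rw [pow_succ] at this; omega)
  have hlarge : (K.filter (Nat.log 2 n < ·)).card ≤ 1 := by
    refine card_le_one.2 fun k hk k' hk' => ?_
    rw [mem_filter] at hk hk'
    by_contra hne
    rcases Nat.lt_or_gt_of_ne hne with hlt | hlt
    · exact absurd (hsmall k hk.1 k' hk'.1 hlt) (not_le.2 hk.2)
    · exact absurd (hsmall k' hk'.1 k hk.1 hlt) (not_le.2 hk'.2)
  have hrest : (K.filter (¬ Nat.log 2 n < ·)).card ≤ Nat.log 2 n + 1 := by
    refine (card_le_card fun k hk => mem_range.2 ?_).trans_eq (card_range _)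
    have := (mem_filter.1 hk).2
    omega
  have := card_filter_add_card_filter_not (s := K) (Nat.log 2 n < ·)
  omega

section PAD

variable {α : Type*} (L : Set (List α))

theorem append_mem_PAD_iff {n : ℕ} {x w : List α} (hx : n < 2 ^ x.length)
    (hw : w.length ≤ n) :
    x ++ w ∈ PAD L ↔ ∃ k ≤ x.length, x.take k ∈ L ∧ x.length + w.length = k + 2 ^ k := by
  constructor
  · rintro ⟨u, hu, v, hv, hxw⟩
    have hlen : x.length + w.length = u.length + 2 ^ u.length := by
      simpa [hv] using congrArg List.length hxw
    have hux : u.length ≤ x.length := by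
      by_contra! hlt
      have : 2 ^ (x.length + 1) ≤ 2 ^ u.length := Nat.pow_le_pow_right two_pos hlt
      have := x.length.lt_two_pow_self
      rw [pow_succ] at *
      omega
    refine ⟨u.length, hux, ?_, hlen⟩
    rw [← List.take_append_of_le_length hux, hxw, List.take_left]
    exact hu
  · rintro ⟨k, hk, hmem, hlen⟩
    refine ⟨x.take k, hmem, x.drop k ++ w, ?_, by rw [← List.append_assoc, List.take_append_drop]⟩
    rw [List.length_take_of_le hk, List.length_append, List.length_drop]
    omega

open Classical in
noncomputable def padWitnessLengths (n : ℕ) (x : List α) : Finset (Fin (n + 1)) :=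
  univ.filter fun ℓ => ∃ k ≤ x.length, x.take k ∈ L ∧ x.length + (ℓ : ℕ) = k + 2 ^ k

theorem card_padWitnessLengths_le (n : ℕ) (x : List α) :
    (padWitnessLengths L n x).card ≤ Nat.log 2 n + 2 := by
  classical
  refine le_trans ?_ (card_filter_add_two_pow_mem_Icc_le x.length n)
  refine (card_le_card_of_injOn Fin.val (fun ℓ hℓ => ?_) Fin.val_injective.injOn).trans
    (card_image_le (f := fun k => k + 2 ^ k - x.length))
  obtain ⟨k, hk, -, hlen⟩ := (mem_filter.1 hℓ).2
  have := ℓ.isLt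
  exact mem_image.2 ⟨k, mem_filter.2 ⟨mem_range.2 (by omega), mem_Icc.2 ⟨by omega, by omega⟩⟩,
    by omega⟩

theorem append_mem_PAD_iff_mem_padWitnessLengths {n : ℕ} {x w : List α}
    (hx : n < 2 ^ x.length) (hw : w.length ≤ n) :
    x ++ w ∈ PAD L ↔
      (⟨w.length, Nat.lt_succ_of_le hw⟩ : Fin (n + 1)) ∈ padWitnessLengths L n x := by
  simp [padWitnessLengths, append_mem_PAD_iff L hx hw]

noncomputable def padClass (n : ℕ) (x : List α) :
    {l : List α // l.length ≤ Nat.log 2 n} ⊕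
      {s : Finset (Fin (n + 1)) // s.card ≤ Nat.log 2 n + 2} :=
  if h : x.length ≤ Nat.log 2 n then .inl ⟨x, h⟩
  else .inr ⟨padWitnessLengths L n x, card_padWitnessLengths_le L n x⟩

theorem thetaN_PAD_of_padClass_eq {n : ℕ} {x y : List α} (h : padClass L n x = padClass L n y) :
    thetaN (PAD L) n x y := by
  unfold padClass at h
  split_ifs at h with hx hy hy
  · cases h
    exact fun _ _ => Iff.rfl
  · have hxy : padWitnessLengths L n x = padWitnessLengths L n y :=
      congrArg Subtype.val (Sum.inr.inj h)
    intro w hw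
    rw [append_mem_PAD_iff_mem_padWitnessLengths L (Nat.lt_pow_of_log_lt one_lt_two (by omega)) hw,
      append_mem_PAD_iff_mem_padWitnessLengths L (Nat.lt_pow_of_log_lt one_lt_two (by omega)) hw,
      hxy]

theorem indexN_PAD_le [Fintype α] (n : ℕ) :
    indexN (PAD L) n ≤ (n + (Fintype.card α + 3)) ^ (Nat.log 2 n + (Fintype.card α + 3)) := by
  have : Finite {l : List α // l.length ≤ Nat.log 2 n} :=
    (List.finite_length_le α _).to_subtype
  set l := Nat.log 2 n
  set c := Fintype.card α + 3
  have hcount : indexN (PAD L) n ≤ (Fintype.card α + 1) ^ l + (n + 2) ^ (l + 2) :=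
    calc indexN (PAD L) n ≤ Nat.card _ :=
          indexN_le_card_of_eq_imp_thetaN (padClass L n) fun _ _ => thetaN_PAD_of_padClass_eq L
      _ = _ := Nat.card_sum
      _ ≤ _ := add_le_add (card_lists_of_length_le α l)
          (by simpa using card_finsets_of_card_le (Fin (n + 1)) (l + 2))
  have hwords : (Fintype.card α + 1) ^ l ≤ (n + c) ^ (l + 2) :=
    (Nat.pow_le_pow_left (by omega) l).trans (Nat.pow_le_pow_right (by omega) (by omega))
  have hsets : (n + 2) ^ (l + 2) ≤ (n + c) ^ (l + 2) := Nat.pow_le_pow_left (by omega) _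
  calc indexN (PAD L) n ≤ 2 * (n + c) ^ (l + 2) := by omega
    _ ≤ (n + c) * (n + c) ^ (l + 2) := Nat.mul_le_mul_right _ (by omega)
    _ = (n + c) ^ (l + 3) := by ring
    _ ≤ (n + c) ^ (l + c) := Nat.pow_le_pow_right (by omega) (by omega)

end PAD

theorem entropy_pad_zero_general {α : Type*} [Fintype α]
    (L : Set (List α)) : entropy (PAD L) = 0 :=
  entropy_eq_zero_of_indexN_le_pow _ (indexN_PAD_le L)

theorem entropy_pad_zero {α : Type*} [Fintype α] (h : 2 ≤ Fintype.card α)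
    (L : Set (List α)) : entropy (PAD L) = 0 :=
  entropy_pad_zero_general L
end
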